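/- arXiv:2009.03761 — 11 statements merged into one kernel-verified Lean document; each statement's English description precedes it below -/
import Mathlib

section
/- Let h, l, α, q₁, q₀ be real numbers with h > 1, l < −1, 0 < α < 1, αh + (1−α)l = 0, and q₁, q₀ ∈ (0,1). Suppose the posterior-mean conditions hold: αhq₁ + (1−α)lq₀ = αq₁ + (1−α)q₀ and αh(1−q₁) + (1−α)l(1−q₀) = −(α(1−q₁) + (1−α)(1−q₀)). Then q₁/q₀ = (1−α)(1−l)/(α(h−1)), (1−q₁)/(1−q₀) = (1−α)(−1−l)/(α(h+1)), and consequently q₁/q₀ > (1−q₁)/(1−q₀). -/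
/-- Observation 1(i): likelihood-ratio formulas and the likelihood-ratio ordering that makes
ω = 1 the good performance state. -/
theorem stmt_0 (h l α q₁ q₀ : ℝ)
    (hh : h > 1) (hl : l < -1) (hα₀ : 0 < α) (hα₁ : α < 1)
    (hmean : α * h + (1 - α) * l = 0)
    (hq₁ : q₁ ∈ Set.Ioo (0:ℝ) 1) (hq₀ : q₀ ∈ Set.Ioo (0:ℝ) 1)
    (hpost₁ : α * h * q₁ + (1 - α) * l * q₀ = α * q₁ + (1 - α) * q₀)
    (hpost₂ : α * h * (1 - q₁) + (1 - α) * l * (1 - q₀)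
      = -(α * (1 - q₁) + (1 - α) * (1 - q₀))) :
    q₁ / q₀ = (1 - α) * (1 - l) / (α * (h - 1)) ∧
    (1 - q₁) / (1 - q₀) = (1 - α) * (-1 - l) / (α * (h + 1)) ∧
    q₁ / q₀ > (1 - q₁) / (1 - q₀) := by
  obtain ⟨hq₁0, hq₁1⟩ := hq₁
  obtain ⟨hq₀0, hq₀1⟩ := hq₀
  have hq₀ne : q₀ ≠ 0 := ne_of_gt hq₀0
  have hq₀1' : (1 : ℝ) - q₀ ≠ 0 := by linarith
  have hαh : α * (h - 1) ≠ 0 := ne_of_gt (by nlinarith)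
  have hαh' : α * (h + 1) ≠ 0 := ne_of_gt (by nlinarith)
  have e1 : q₁ / q₀ = (1 - α) * (1 - l) / (α * (h - 1)) := by
    rw [div_eq_div_iff hq₀ne hαh]
    nlinarith [hpost₁]
  have e2 : (1 - q₁) / (1 - q₀) = (1 - α) * (-1 - l) / (α * (h + 1)) := by
    field_simp
    nlinarith [hpost₂]
  refine ⟨e1, e2, ?_⟩
  rw [e1, e2]
  rw [gt_iff_lt, div_lt_div_iff₀ (by nlinarith) (by nlinarith)]
  have h1α : (0:ℝ) < 1 - α := by linarith
  nlinarith [mul_pos h1α (sub_pos.mpr (lt_trans hl (by linarith : (-1:ℝ) < h)))]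
end

section
/- Let h : [0,1] → ℝ be continuous, strictly convex, differentiable on (0,1), with h(0) = 0 and h(t) > 0 for all t ∈ (0,1]. Then for all x, y ∈ (0,1): h(x) − h(y) < h'(x)·(x + y). In particular, taking either sign of the roles of x and y, both h(y) − h(x) + h'(x)(x+y) > 0 and h(x) − h(y) + h'(y)(x+y) > 0, so the attention cost I(x, y) = (y·h(x) + x·h(y))/(x + y) is strictly increasing in each argument on (0,1)². -/
/-- For a strictly convex cost kernel, h(x) − h(y) < h'(x)(x+y), both derivative numerators of
the attention cost are positive, and the attention cost I(x,y) = (y·h(x) + x·h(y))/(x+y) is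
strictly increasing in each argument on (0,1)². -/
theorem stmt_5 (h h' : ℝ → ℝ)
    (hcont : ContinuousOn h (Set.Icc 0 1))
    (hconv : StrictConvexOn ℝ (Set.Icc 0 1) h)
    (hderiv : ∀ t ∈ Set.Ioo (0:ℝ) 1, HasDerivAt h (h' t) t)
    (h0 : h 0 = 0) (hpos : ∀ t ∈ Set.Ioc (0:ℝ) 1, 0 < h t) :
    (∀ x ∈ Set.Ioo (0:ℝ) 1, ∀ y ∈ Set.Ioo (0:ℝ) 1,
      h x - h y < h' x * (x + y)) ∧
    (∀ x ∈ Set.Ioo (0:ℝ) 1, ∀ y ∈ Set.Ioo (0:ℝ) 1,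
      0 < h y - h x + h' x * (x + y) ∧ 0 < h x - h y + h' y * (x + y)) ∧
    (∀ x₁ ∈ Set.Ioo (0:ℝ) 1, ∀ x₂ ∈ Set.Ioo (0:ℝ) 1, ∀ y ∈ Set.Ioo (0:ℝ) 1,
      x₁ < x₂ →
      (y * h x₁ + x₁ * h y) / (x₁ + y) < (y * h x₂ + x₂ * h y) / (x₂ + y)) ∧
    (∀ x ∈ Set.Ioo (0:ℝ) 1, ∀ y₁ ∈ Set.Ioo (0:ℝ) 1, ∀ y₂ ∈ Set.Ioo (0:ℝ) 1,
      y₁ < y₂ →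
      (y₁ * h x + x * h y₁) / (x + y₁) < (y₂ * h x + x * h y₂) / (x + y₂)) := by
  have mem01 : ∀ x ∈ Set.Ioo (0:ℝ) 1, x ∈ Set.Icc (0:ℝ) 1 := fun x hx =>
    ⟨hx.1.le, hx.2.le⟩
  have h0mem : (0:ℝ) ∈ Set.Icc (0:ℝ) 1 := ⟨le_rfl, zero_le_one⟩
  -- h x / x < h' x for x ∈ (0,1)
  have slope_lt : ∀ x ∈ Set.Ioo (0:ℝ) 1, h x / x < h' x := by
    intro x hx
    have := hconv.slope_lt_of_hasDerivAt h0mem (mem01 x hx) hx.1 (hderiv x hx)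
    rw [slope_def_field, h0] at this
    simpa [div_eq_mul_inv] using this
  have hxpos : ∀ x ∈ Set.Ioo (0:ℝ) 1, 0 < h x := fun x hx =>
    hpos x ⟨hx.1, hx.2.le⟩
  -- key inequality
  have key : ∀ x ∈ Set.Ioo (0:ℝ) 1, ∀ y ∈ Set.Ioo (0:ℝ) 1,
      h x - h y < h' x * (x + y) := by
    intro x hx y hy
    have h1 := slope_lt x hx
    have h2 := hxpos x hx
    have h3 := hxpos y hy
    have hx0 := hx.1
    have hy0 := hy.1
    have : h x / x * x = h x := div_mul_cancel₀ _ hx0.ne'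
    nlinarith [mul_lt_mul_of_pos_right h1 hx0, mul_pos (h1.trans_le le_rfl |> fun _ => h2) hx0]
  -- slope monotonicity from 0
  have sec : ∀ x₁ ∈ Set.Ioo (0:ℝ) 1, ∀ x₂ ∈ Set.Ioo (0:ℝ) 1, x₁ < x₂ →
      x₂ * h x₁ < x₁ * h x₂ := by
    intro x₁ h1 x₂ h2 hlt
    have := hconv.secant_strict_mono h0mem (mem01 x₁ h1) (mem01 x₂ h2)
      h1.1.ne' h2.1.ne' hlt
    rw [h0] at this
    simp only [sub_zero] at this
    have := (div_lt_div_iff₀ h1.1 h2.1).mp this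
    linarith
  have mono : ∀ x₁ ∈ Set.Ioo (0:ℝ) 1, ∀ x₂ ∈ Set.Ioo (0:ℝ) 1, x₁ < x₂ →
      h x₁ < h x₂ := by
    intro x₁ h1 x₂ h2 hlt
    have hs := sec x₁ h1 x₂ h2 hlt
    nlinarith [hxpos x₁ h1, h1.1]
  refine ⟨key, ?_, ?_, ?_⟩
  · intro x hx y hy
    constructor
    · have := key x hx y hy
      have := hxpos x hx; have := hxpos y hy
      -- h y - h x + h' x (x+y) > 0 ⟸ h x - h y < h' x (x+y)
      linarith [key x hx y hy]
    · linarith [key y hy x hx]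
  · intro x₁ h1 x₂ h2 y hy hlt
    rw [div_lt_div_iff₀ (by linarith [h1.1, hy.1]) (by linarith [h2.1, hy.1])]
    have hs := sec x₁ h1 x₂ h2 hlt
    have hm := mono x₁ h1 x₂ h2 hlt
    nlinarith [mul_lt_mul_of_pos_left hs hy.1,
      mul_lt_mul_of_pos_left hm (mul_pos hy.1 hy.1),
      mul_pos (mul_pos hy.1 (hxpos y hy)) (sub_pos.mpr hlt)]
  · intro x hx y₁ h1 y₂ h2 hlt
    rw [div_lt_div_iff₀ (by linarith [hx.1, h1.1]) (by linarith [hx.1, h2.1])]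
    have hs := sec y₁ h1 y₂ h2 hlt
    have hm := mono y₁ h1 y₂ h2 hlt
    nlinarith [mul_pos (mul_pos hx.1 (hxpos x hx)) (sub_pos.mpr hlt),
      mul_lt_mul_of_pos_left hm (mul_pos hx.1 hx.1),
      mul_lt_mul_of_pos_left hs hx.1]
end

section
/- Let h : [0,1] → ℝ be continuous, strictly convex, differentiable on (0,1), with h(0) = 0 and h(t) > 0 for all t ∈ (0,1]. Then for all x, y ∈ (0,1) with x > y: h(y) − h(x) + h'(x)(x+y) > 2h'(x)·y, h(x) − h(y) + h'(y)(x+y) < 2h'(x)·x, and consequently x·(h(y) − h(x) + h'(x)(x+y)) > y·(h(x) − h(y) + h'(y)(x+y)) > 0, i.e., the ratio (h(y) − h(x) + h'(x)(x+y))/(h(x) − h(y) + h'(y)(x+y)) exceeds y/x. -/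
/-- Key bounds showing that the incentive power falls along an attention level curve as the
signal becomes more R-biased: for x > y, the ratio of the level-curve derivative numerators
exceeds y/x. -/
theorem stmt_6 (h h' : ℝ → ℝ)
    (hcont : ContinuousOn h (Set.Icc 0 1))
    (hconv : StrictConvexOn ℝ (Set.Icc 0 1) h)
    (hderiv : ∀ t ∈ Set.Ioo (0:ℝ) 1, HasDerivAt h (h' t) t)
    (h0 : h 0 = 0) (hpos : ∀ t ∈ Set.Ioc (0:ℝ) 1, 0 < h t)
    (x y : ℝ) (hx : x ∈ Set.Ioo (0:ℝ) 1) (hy : y ∈ Set.Ioo (0:ℝ) 1) (hxy : x > y) :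
    2 * h' x * y < h y - h x + h' x * (x + y) ∧
    h x - h y + h' y * (x + y) < 2 * h' x * x ∧
    0 < y * (h x - h y + h' y * (x + y)) ∧
    y * (h x - h y + h' y * (x + y)) < x * (h y - h x + h' x * (x + y)) ∧
    y / x < (h y - h x + h' x * (x + y)) / (h x - h y + h' y * (x + y)) := by
  obtain ⟨hx0, hx1⟩ := hx
  obtain ⟨hy0, hy1⟩ := hy
  have hxI : x ∈ Set.Icc (0:ℝ) 1 := ⟨hx0.le, hx1.le⟩
  have hyI : y ∈ Set.Icc (0:ℝ) 1 := ⟨hy0.le, hy1.le⟩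
  have h0I : (0:ℝ) ∈ Set.Icc (0:ℝ) 1 := ⟨le_rfl, zero_le_one⟩
  have hdx := hderiv x ⟨hx0, hx1⟩
  have hdy := hderiv y ⟨hy0, hy1⟩
  -- slope y x < h' x
  have hs1 : slope h y x < h' x := hconv.slope_lt_of_hasDerivAt hyI hxI hxy hdx
  -- h' y < slope y x
  have hs2 : h' y < slope h y x := hconv.lt_slope_of_hasDerivAt hyI hxI hxy hdy
  -- slope 0 y < h' y, so h' y > h y / y > 0
  have hs3 : slope h 0 y < h' y := hconv.slope_lt_of_hasDerivAt h0I hyI hy0 hdy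
  have hxy0 : (0:ℝ) < x - y := by linarith
  have hslope : slope h y x = (h x - h y) / (x - y) := by
    rw [slope_def_field]
  have hA : h x - h y < h' x * (x - y) := by
    rw [hslope, div_lt_iff₀ hxy0] at hs1; linarith
  have hB : h' y * (x - y) < h x - h y := by
    rw [hslope, lt_div_iff₀ hxy0] at hs2; linarith
  have hyy : (0:ℝ) < h' y := by
    have : slope h 0 y = h y / y := by rw [slope_def_field, h0]; ring_nf
    have hhy : 0 < h y := hpos y ⟨hy0, hy1.le⟩
    rw [this] at hs3
    have : 0 < h y / y := div_pos hhy hy0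
    linarith
  have hxx : h' y < h' x := by
    rw [hslope, lt_div_iff₀ hxy0] at hs2
    rw [hslope, div_lt_iff₀ hxy0] at hs1
    nlinarith
  have c1 : 2 * h' x * y < h y - h x + h' x * (x + y) := by nlinarith
  have c2 : h x - h y + h' y * (x + y) < 2 * h' x * x := by nlinarith
  have c3pos : 0 < h x - h y + h' y * (x + y) := by nlinarith
  have c3 : 0 < y * (h x - h y + h' y * (x + y)) := mul_pos hy0 c3pos
  have c4 : y * (h x - h y + h' y * (x + y)) < x * (h y - h x + h' x * (x + y)) := by nlinarith
  refine ⟨c1, c2, c3, c4, ?_⟩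
  rw [div_lt_div_iff₀ hx0 c3pos]
  linarith [c4]
end

section
/- Let h : [0,1] → ℝ be continuous, strictly convex, continuously differentiable on (0,1), with h(0) = 0 and h(t) > 0 for all t ∈ (0,1]. Define I(x, y) = (y·h(x) + x·h(y))/(x + y). Suppose x, y, x', y' ∈ (0,1) satisfy y ≤ x < x' and I(x, y) = I(x', y'). Then y' < y, the incentive power strictly falls: 2x'y'/(x'+y') < 2xy/(x+y), and the disagreement strictly rises: 1 − 2x'y'(1+x'y')/(x'+y')² > 1 − 2xy(1+xy)/(x+y)². -/
set_option maxHeartbeats 1000000 in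
/-- Lemma 4(i) in comparison form: moving along a level curve of the attention cost toward
greater own-party bias strictly decreases the incentive power and strictly increases the
partisan disagreement. -/
theorem stmt_9 (h h' : ℝ → ℝ)
    (hcont : ContinuousOn h (Set.Icc 0 1))
    (hconv : StrictConvexOn ℝ (Set.Icc 0 1) h)
    (hderiv : ∀ t ∈ Set.Ioo (0:ℝ) 1, HasDerivAt h (h' t) t)
    (hderivcont : ContinuousOn h' (Set.Ioo 0 1))
    (h0 : h 0 = 0) (hpos : ∀ t ∈ Set.Ioc (0:ℝ) 1, 0 < h t)
    (x y x' y' : ℝ)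
    (hx : x ∈ Set.Ioo (0:ℝ) 1) (hy : y ∈ Set.Ioo (0:ℝ) 1)
    (hx' : x' ∈ Set.Ioo (0:ℝ) 1) (hy' : y' ∈ Set.Ioo (0:ℝ) 1)
    (hyx : y ≤ x) (hxx' : x < x')
    (hlevel : (y * h x + x * h y) / (x + y) = (y' * h x' + x' * h y') / (x' + y')) :
    y' < y ∧
    2 * x' * y' / (x' + y') < 2 * x * y / (x + y) ∧
    1 - 2 * x * y * (1 + x * y) / (x + y) ^ 2
      < 1 - 2 * x' * y' * (1 + x' * y') / (x' + y') ^ 2 := by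
  obtain ⟨hx0, hx1⟩ := hx
  obtain ⟨hy0, hy1⟩ := hy
  obtain ⟨hx'0, hx'1⟩ := hx'
  obtain ⟨hy'0, hy'1⟩ := hy'
  -- chord inequality from strict convexity
  have conv3 : ∀ p t q : ℝ, 0 ≤ p → p < t → t < q → q ≤ 1 →
      (q - p) * h t < (q - t) * h p + (t - p) * h q := by
    intro p t q hp hpt htq hq1
    have hqp : 0 < q - p := by linarith
    have hqp' : q - p ≠ 0 := ne_of_gt hqp
    have hmem1 : p ∈ Set.Icc (0:ℝ) 1 := ⟨hp, by linarith⟩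
    have hmem2 : q ∈ Set.Icc (0:ℝ) 1 := ⟨by linarith, hq1⟩
    have hne : p ≠ q := by linarith
    have ha : 0 < (q - t) / (q - p) := div_pos (by linarith) hqp
    have hb : 0 < (t - p) / (q - p) := div_pos (by linarith) hqp
    have hab : (q - t) / (q - p) + (t - p) / (q - p) = 1 := by
      field_simp
      ring
    have hqq := hconv.2 hmem1 hmem2 hne ha hb hab
    simp only [smul_eq_mul] at hqq
    have hcomb : (q - t) / (q - p) * p + (t - p) / (q - p) * q = t := by
      field_simp
      ring
    rw [hcomb] at hqq
    have h2 := mul_lt_mul_of_pos_left hqq hqp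
    have h3 : (q - p) * ((q - t) / (q - p) * h p + (t - p) / (q - p) * h q)
        = (q - t) * h p + (t - p) * h q := by
      field_simp
    linarith [h2, h3]
  -- h(t)/t strictly increasing (via chord through 0)
  have gm : ∀ p q : ℝ, 0 < p → p < q → q ≤ 1 → q * h p < p * h q := by
    intro p q hp hpq hq1
    have := conv3 0 p q le_rfl hp hpq hq1
    simpa [h0] using this
  -- h strictly increasing on (0,1]
  have hm : ∀ p q : ℝ, 0 < p → p < q → q ≤ 1 → h p < h q := by
    intro p q hp hpq hq1
    have h1 := gm p q hp hpq hq1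
    have h2 : 0 < h q := hpos q ⟨by linarith, hq1⟩
    nlinarith
  have hσ : 0 < x + y := by linarith
  have hR : 0 < x' + y' := by linarith
  set c := (y * h x + x * h y) / (x + y) with hc
  have e1 : y * h x + x * h y = c * (x + y) := by
    rw [hc]; field_simp
  have e2 : y' * h x' + x' * h y' = c * (x' + y') := by
    rw [hlevel]; field_simp
  -- strict monotonicity of the attention cost in each coordinate (product form)
  have Ilt : ∀ a p q : ℝ, 0 < a → a < 1 → 0 < p → p < q → q < 1 →
      (a * h p + p * h a) * (q + a) < (a * h q + q * h a) * (p + a) := by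
    intro a p q ha0 ha1 hp0 hpq hq1
    have f1 := gm p q hp0 hpq (le_of_lt hq1)
    have f2 := hm p q hp0 hpq (le_of_lt hq1)
    have f3 : 0 < h a := hpos a ⟨ha0, le_of_lt ha1⟩
    nlinarith [mul_lt_mul_of_pos_left f1 ha0,
      mul_lt_mul_of_pos_left f2 (mul_pos ha0 ha0),
      mul_pos (mul_pos ha0 f3) (sub_pos.mpr hpq)]
  -- Step 1 : y' < y
  have hyy' : y' < y := by
    by_contra hcon
    push_neg at hcon
    have m1 := Ilt y x x' hy0 hy1 hx0 hxx' hx'1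
    rw [e1] at m1
    have key1 : c * (x' + y) < y * h x' + x' * h y := by nlinarith [m1, hσ]
    rcases eq_or_lt_of_le hcon with heq | hlt
    · rw [← heq] at e2
      linarith [key1, e2]
    · have m2 := Ilt x' y y' hx'0 hx'1 hy0 hlt hy'1
      have key2 : x' * h y + y * h x' < c * (y + x') := by
        nlinarith [m2, hR, e2]
      linarith [key1, key2]
  have hy'x' : y' < x' := by linarith
  have hhy'x' : h y' < h x' := hm y' x' hy'0 hy'x' (le_of_lt hx'1)
  have hcx' : c < h x' := by
    nlinarith [e2, mul_lt_mul_of_pos_left hhy'x' hx'0, hR]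
  -- chord inequalities at t = x and t = y over [y', x']
  have kx := conv3 y' x x' (le_of_lt hy'0) (by linarith) hxx' (le_of_lt hx'1)
  have ky := conv3 y' y x' (le_of_lt hy'0) hyy' (by linarith) (le_of_lt hx'1)
  have P1 : 0 < (y * x') * ((x' - x) * h y' + (x - y') * h x' - (x' - y') * h x) := by
    have := mul_lt_mul_of_pos_left kx (mul_pos hy0 hx'0)
    nlinarith [this]
  have P2 : 0 < (x * x') * ((x' - y) * h y' + (y - y') * h x' - (x' - y') * h y) := by
    have := mul_lt_mul_of_pos_left ky (mul_pos hx0 hx'0)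
    nlinarith [this]
  have P3 : (x' * (x' - y')) * (y * h x + x * h y - c * (x + y)) = 0 := by
    rw [e1]; ring
  have P4 : (x' * (x + y) - 2 * x * y) * (y' * h x' + x' * h y' - c * (x' + y')) = 0 := by
    rw [e2]; ring
  have key : 0 < 2 * (h x' - c) * (x * y * (x' + y') - x' * y' * (x + y)) := by
    have hid : 2 * (h x' - c) * (x * y * (x' + y') - x' * y' * (x + y)) =
        (y * x') * ((x' - x) * h y' + (x - y') * h x' - (x' - y') * h x)
        + (x * x') * ((x' - y) * h y' + (y - y') * h x' - (x' - y') * h y)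
        + (x' * (x' - y')) * (y * h x + x * h y - c * (x + y))
        - (x' * (x + y) - 2 * x * y) * (y' * h x' + x' * h y' - c * (x' + y')) := by
      ring
    rw [hid, P3, P4]
    linarith [P1, P2]
  have hgap : 0 < x * y * (x' + y') - x' * y' * (x + y) := by
    nlinarith [key, hcx']
  refine ⟨hyy', ?_, ?_⟩
  · rw [div_lt_div_iff₀ hR hσ]
    nlinarith [hgap]
  · have p1 : 0 < x' * y - x * y' := by nlinarith [hyy', hxx', hx0, hy0]
    have p2 : 0 < x * x' - y * y' := by
      nlinarith [mul_le_mul_of_nonneg_right hyx (le_of_lt hy'0),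
        mul_lt_mul_of_pos_left hy'x' hx0]
    have hT : x' * y' * (x + y) ^ 2 < x * y * (x' + y') ^ 2 := by
      nlinarith [mul_pos p1 p2]
    have hpos1 : 0 < x' * y' * (x + y) := by positivity
    have hsq : x' * y' * (x + y) * (x' * y' * (x + y))
        < x * y * (x' + y') * (x * y * (x' + y')) := by
      nlinarith [hgap, hpos1]
    have hσ2 : 0 < (x + y) ^ 2 := by positivity
    have hR2 : 0 < (x' + y') ^ 2 := by positivity
    have hmain : 2 * x' * y' * (1 + x' * y') / (x' + y') ^ 2
        < 2 * x * y * (1 + x * y) / (x + y) ^ 2 := by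
      rw [div_lt_div_iff₀ hR2 hσ2]
      nlinarith [hT, hsq]
    linarith [hmain]
end

section
/- Let h : [0,1] → ℝ be continuous, strictly convex, differentiable on (0,1), with h(0) = 0 and h(t) > 0 for all t ∈ (0,1]. Then for all x, y ∈ (0,1) with x > y: (2x²y − y + x)·(h(y) − h(x) + h'(x)(x+y)) > (2xy² − x + y)·(h(x) − h(y) + h'(y)(x+y)), where moreover 2x²y − y + x > 0 and both factors h(y) − h(x) + h'(x)(x+y) and h(x) − h(y) + h'(y)(x+y) are strictly positive. -/
/-- D_x·I_y − D_y·I_x > 0 for x > y: the partisan disagreement strictly increases along a level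
curve of the attention cost as the signal becomes more R-biased. -/
theorem stmt_10 (h h' : ℝ → ℝ)
    (hcont : ContinuousOn h (Set.Icc 0 1))
    (hconv : StrictConvexOn ℝ (Set.Icc 0 1) h)
    (hderiv : ∀ t ∈ Set.Ioo (0:ℝ) 1, HasDerivAt h (h' t) t)
    (h0 : h 0 = 0) (hpos : ∀ t ∈ Set.Ioc (0:ℝ) 1, 0 < h t)
    (x y : ℝ) (hx : x ∈ Set.Ioo (0:ℝ) 1) (hy : y ∈ Set.Ioo (0:ℝ) 1) (hxy : x > y) :
    0 < 2 * x ^ 2 * y - y + x ∧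
    0 < h y - h x + h' x * (x + y) ∧
    0 < h x - h y + h' y * (x + y) ∧
    (2 * x ^ 2 * y - y + x) * (h y - h x + h' x * (x + y))
      > (2 * x * y ^ 2 - x + y) * (h x - h y + h' y * (x + y)) := by
  obtain ⟨hx0, hx1⟩ := hx
  obtain ⟨hy0, hy1⟩ := hy
  have hxI : x ∈ Set.Icc (0:ℝ) 1 := ⟨hx0.le, hx1.le⟩
  have hyI : y ∈ Set.Icc (0:ℝ) 1 := ⟨hy0.le, hy1.le⟩
  have h0I : (0:ℝ) ∈ Set.Icc (0:ℝ) 1 := ⟨le_refl _, zero_le_one⟩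
  have hdx := hderiv x ⟨hx0, hx1⟩
  have hdy := hderiv y ⟨hy0, hy1⟩
  have hxmy : (0:ℝ) < x - y := sub_pos.mpr hxy
  -- secant/tangent inequalities
  have s1 : h' y * (x - y) < h x - h y := by
    have := hconv.lt_slope_of_hasDerivAt hyI hxI hxy hdy
    rw [slope_def_field] at this
    calc h' y * (x - y) < (h x - h y) / (x - y) * (x - y) := by
          exact mul_lt_mul_of_pos_right this hxmy
      _ = h x - h y := div_mul_cancel₀ _ hxmy.ne'
  have s2 : h x - h y < h' x * (x - y) := by
    have := hconv.slope_lt_of_hasDerivAt hyI hxI hxy hdx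
    rw [slope_def_field] at this
    calc h x - h y = (h x - h y) / (x - y) * (x - y) := (div_mul_cancel₀ _ hxmy.ne').symm
      _ < h' x * (x - y) := mul_lt_mul_of_pos_right this hxmy
  -- h' x > 0 and h' y > 0
  have hpx : 0 < h' x := by
    have := hconv.slope_lt_of_hasDerivAt h0I hxI hx0 hdx
    rw [slope_def_field, h0, sub_zero, sub_zero] at this
    have hx' : 0 < h x / x := div_pos (hpos x ⟨hx0, hx1.le⟩) (by linarith)
    linarith [this, hx']
  have hpy : 0 < h' y := by
    have := hconv.slope_lt_of_hasDerivAt h0I hyI hy0 hdy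
    rw [slope_def_field, h0, sub_zero, sub_zero] at this
    have hy' : 0 < h y / y := div_pos (hpos y ⟨hy0, hy1.le⟩) (by linarith)
    linarith [this, hy']
  have hyx' : h' y < h' x := by
    have := hconv.lt_slope_of_hasDerivAt hyI hxI hxy hdy
    have h2 := hconv.slope_lt_of_hasDerivAt hyI hxI hxy hdx
    exact this.trans h2
  -- P and Q bounds
  have hA : 0 < 2 * x ^ 2 * y - y + x := by nlinarith
  have hP : 2 * y * h' x < h y - h x + h' x * (x + y) := by nlinarith
  have hQlb : 2 * x * h' y < h x - h y + h' y * (x + y) := by nlinarith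
  have hQub : h x - h y + h' y * (x + y) < 2 * x * h' x := by nlinarith
  have hP0 : 0 < h y - h x + h' x * (x + y) := lt_trans (by positivity) hP
  have hQ0 : 0 < h x - h y + h' y * (x + y) := lt_trans (by positivity) hQlb
  refine ⟨hA, hP0, hQ0, ?_⟩
  rcases le_or_gt (2 * x * y ^ 2 - x + y) 0 with hB | hB
  · have : (2 * x * y ^ 2 - x + y) * (h x - h y + h' y * (x + y)) ≤ 0 :=
      mul_nonpos_of_nonpos_of_nonneg hB hQ0.le
    nlinarith [mul_pos hA hP0]
  · have h1 : (2 * x * y ^ 2 - x + y) * (h x - h y + h' y * (x + y))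
        < (2 * x * y ^ 2 - x + y) * (2 * x * h' x) := by
      exact mul_lt_mul_of_pos_left hQub hB
    have h2 : (2 * x * y ^ 2 - x + y) * (2 * x * h' x)
        < (2 * x ^ 2 * y - y + x) * (2 * y * h' x) := by nlinarith
    have h3 : (2 * x ^ 2 * y - y + x) * (2 * y * h' x)
        < (2 * x ^ 2 * y - y + x) * (h y - h x + h' x * (x + y)) :=
      mul_lt_mul_of_pos_left hP hA
    linarith
end

section
/- Let h : [0,1] → ℝ be continuous with h(0) = 0, let v ∈ (0,1), and let I₁ > 0. Then there exists ε ∈ (0, 1−v) such that the binary signal (1−ε, ε) is feasible and strictly valuable: I(1−ε, ε) = ε·h(1−ε) + (1−ε)·h(ε) ≤ I₁ and V(1−ε, ε) = ε·(1 − ε − v) > 0. Consequently, the supremum of V over the feasible set {(x, y) ∈ [0,1]² : x + y > 0 and I(x, y) ≤ I₁} ∪ {(0,0)} (with V(0,0) = 0) is strictly positive. -/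
/-- The attention cost of the binary signal (x, y). -/
noncomputable def attCost (h : ℝ → ℝ) (x y : ℝ) : ℝ := (y * h x + x * h y) / (x + y)

/-- The right-wing voter's expressive voting gain from the binary signal p = (x, y);
at (0,0) the formula evaluates to 0 (no signal). -/
noncomputable def gainR (v : ℝ) (p : ℝ × ℝ) : ℝ := p.2 / (p.1 + p.2) * max (p.1 - v) 0

/-- The feasible set of binary signals for bandwidth I₁, together with the null signal (0,0). -/
def feasSet (h : ℝ → ℝ) (I₁ : ℝ) : Set (ℝ × ℝ) :=
  {p : ℝ × ℝ | p.1 ∈ Set.Icc (0:ℝ) 1 ∧ p.2 ∈ Set.Icc (0:ℝ) 1 ∧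
    0 < p.1 + p.2 ∧ attCost h p.1 p.2 ≤ I₁} ∪ {(0, 0)}

/-- An extreme voter with any positive bandwidth strictly benefits from paying attention, via an
occasional big surprise (1−ε, ε). -/
theorem stmt_11 (h : ℝ → ℝ) (hcont : ContinuousOn h (Set.Icc 0 1)) (h0 : h 0 = 0)
    (v I₁ : ℝ) (hv : v ∈ Set.Ioo (0:ℝ) 1) (hI : 0 < I₁) :
    (∃ ε : ℝ, 0 < ε ∧ ε < 1 - v ∧
      ε * h (1 - ε) + (1 - ε) * h ε ≤ I₁ ∧ 0 < ε * (1 - ε - v)) ∧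
    0 < sSup (gainR v '' feasSet h I₁) := by
  obtain ⟨hv0, hv1⟩ := hv
  -- the cost function g
  set g : ℝ → ℝ := fun ε => ε * h (1 - ε) + (1 - ε) * h ε with hg
  have hgcont : ContinuousOn g (Set.Icc 0 1) := by
    apply ContinuousOn.add
    · apply ContinuousOn.mul continuousOn_id
      apply hcont.comp (by fun_prop)
      intro x hx
      simp only [Set.mem_Icc] at hx ⊢
      constructor <;> linarith [hx.1, hx.2]
    · apply ContinuousOn.mul (by fun_prop)
      exact hcont
  have hg0 : g 0 = 0 := by simp [hg, h0]
  have htend : Filter.Tendsto g (nhdsWithin 0 (Set.Icc 0 1)) (nhds 0) := by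
    have := hgcont 0 (by norm_num)
    rw [ContinuousWithinAt, hg0] at this
    exact this
  have hev : ∀ᶠ ε in nhdsWithin 0 (Set.Icc 0 1), g ε < I₁ :=
    htend.eventually (Filter.Tendsto.eventually_lt_const hI Filter.tendsto_id)
  rw [eventually_nhdsWithin_iff, Metric.eventually_nhds_iff] at hev
  obtain ⟨δ, hδ, hδ'⟩ := hev
  -- choose ε
  set ε : ℝ := min (δ/2) ((1 - v)/2) with hε
  have hε0 : 0 < ε := by
    apply lt_min (by linarith) (by linarith)
  have hε1v : ε < 1 - v := by
    have : ε ≤ (1 - v)/2 := min_le_right _ _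
    linarith
  have hε1 : ε < 1 := by linarith
  have hεδ : ε < δ := by
    have : ε ≤ δ/2 := min_le_left _ _
    linarith
  have hgε : g ε < I₁ := by
    apply hδ' (by simp [Real.dist_eq, abs_of_pos hε0, hεδ]) ⟨by linarith, by linarith⟩
  have hgain : 0 < ε * (1 - ε - v) := by
    apply mul_pos hε0 (by linarith)
  refine ⟨⟨ε, hε0, hε1v, le_of_lt hgε, hgain⟩, ?_⟩
  -- sSup part
  have hmem : ε * (1 - ε - v) ∈ gainR v '' feasSet h I₁ := by
    refine ⟨(1 - ε, ε), ?_, ?_⟩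
    · left
      have hglt : ε * h (1 - ε) + (1 - ε) * h ε < I₁ := hgε
      refine ⟨⟨by simp; linarith, by simp; linarith⟩,
        ⟨by simp; linarith, by simp; linarith⟩, by simp, ?_⟩
      show attCost h (1 - ε) ε ≤ I₁
      rw [attCost, show (1 - ε) + ε = (1:ℝ) by ring, div_one]
      linarith
    · simp only [gainR]
      have h1 : (1 - ε) + ε = 1 := by ring
      rw [h1, div_one, max_eq_left (by linarith)]
  have hbdd : BddAbove (gainR v '' feasSet h I₁) := by
    refine ⟨1, ?_⟩
    rintro a ⟨p, hp, rfl⟩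
    rcases hp with ⟨⟨hx0, hx1⟩, ⟨hy0, hy1⟩, hsum, _⟩ | hp
    · have hr : p.2 / (p.1 + p.2) ≤ 1 := by
        rw [div_le_one hsum]; linarith
      have hr0 : 0 ≤ p.2 / (p.1 + p.2) := div_nonneg hy0 (le_of_lt hsum)
      have hm : max (p.1 - v) 0 ≤ 1 := by
        apply max_le (by linarith) (by norm_num)
      calc p.2 / (p.1 + p.2) * max (p.1 - v) 0 ≤ 1 * 1 :=
            mul_le_mul hr hm (le_max_right _ _) (by norm_num)
        _ = 1 := by ring
    · simp only [Set.mem_singleton_iff] at hp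
      subst hp
      simp [gainR]
  exact lt_of_lt_of_le hgain (le_csSup hbdd hmem)
end

section
/- Let h : [0,1] → ℝ be continuous, strictly convex, differentiable on (0,1), with h(0) = 0 and h(t) > 0 for t ∈ (0,1], and let v ∈ (0,1) and I₁ ∈ (0, h(1)). Consider maximizing V(x, y) = (y/(x+y))·max(x − v, 0) over the compact feasible set K = {(x, y) ∈ [0,1]² : x + y > 0, I(x, y) ≤ I₁} ∪ {(0,0)}, where I(x, y) = (y·h(x) + x·h(y))/(x+y), V(0,0) = 0, and I(0,0) = 0. Then a maximizer exists, and every maximizer (x, y) satisfies: (i) strict obedience, x > v (so V(x, y) > 0 and y > 0); (ii) bandwidth exhaustion, I(x, y) = I₁; and (iii) own-party bias, x > y. -/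
open Set Filter Topology


lemma ev_gt_of_deriv_pos {f : ℝ → ℝ} {f' : ℝ} (hf : HasDerivAt f f' 0) (hp : 0 < f') :
    ∀ᶠ t in 𝓝[>] (0:ℝ), f 0 < f t := by
  have hs : Tendsto (slope f 0) (𝓝[>] (0:ℝ)) (𝓝 f') :=
    (hasDerivAt_iff_tendsto_slope.1 hf).mono_left
      (nhdsWithin_mono 0 (fun x hx => ne_of_gt hx))
  have h1 : ∀ᶠ t in 𝓝[>] (0:ℝ), 0 < slope f 0 t := hs.eventually (eventually_gt_nhds hp)
  filter_upwards [h1, self_mem_nhdsWithin] with t ht ht0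
  have hts : slope f 0 t = (f t - f 0) / t := by simp [slope]; ring
  rw [hts] at ht
  have := mul_pos ht (show (0:ℝ) < t from ht0)
  rw [div_mul_cancel₀] at this
  · linarith
  · exact ne_of_gt ht0

lemma ev_lt_of_deriv_neg {f : ℝ → ℝ} {f' : ℝ} (hf : HasDerivAt f f' 0) (hn : f' < 0) :
    ∀ᶠ t in 𝓝[>] (0:ℝ), f t < f 0 := by
  have := ev_gt_of_deriv_pos (f := fun t => -f t) (f' := -f') hf.neg (by linarith)
  filter_upwards [this] with t ht; simpa using ht

lemma feas_eq (h : ℝ → ℝ) (I₁ : ℝ) :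
    feasSet h I₁ = (Icc (0:ℝ) 1 ×ˢ Icc (0:ℝ) 1) ∩
      {p : ℝ × ℝ | p.2 * h p.1 + p.1 * h p.2 - I₁ * (p.1 + p.2) ≤ 0} := by
  ext p
  constructor
  · rintro (⟨h1, h2, h3, h4⟩ | hp)
    · refine ⟨⟨h1, h2⟩, ?_⟩
      simp only [mem_setOf_eq]
      nlinarith [(div_le_iff₀ h3).1 h4]
    · simp only [mem_singleton_iff] at hp
      subst hp
      simp [mem_prod]
  · rintro ⟨⟨h1, h2⟩, h3⟩
    simp only [mem_setOf_eq] at h3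
    rcases eq_or_lt_of_le (add_nonneg h1.1 h2.1) with heq | hlt
    · right
      have hx : p.1 = 0 := by have := h1.1; have := h2.1; linarith
      have hy : p.2 = 0 := by have := h1.1; have := h2.1; linarith
      simp [mem_singleton_iff, Prod.ext_iff, hx, hy]
    · left
      refine ⟨h1, h2, hlt, ?_⟩
      rw [attCost, div_le_iff₀ hlt]
      linarith

lemma feas_compact (h : ℝ → ℝ) (I₁ : ℝ)
    (hcont : ContinuousOn h (Icc 0 1)) : IsCompact (feasSet h I₁) := by
  set ht : ℝ → ℝ := fun t => h (max 0 (min 1 t)) with hht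
  have hclamp : Continuous fun t : ℝ => max 0 (min 1 t) :=
    continuous_const.max (continuous_const.min continuous_id)
  have htc : Continuous ht :=
    hcont.comp_continuous hclamp
      (fun t => ⟨le_max_left 0 _, max_le zero_le_one (min_le_left 1 t)⟩)
  have hcl : ∀ t ∈ Icc (0:ℝ) 1, ht t = h t := by
    intro t htt
    simp only [hht]
    rw [min_eq_right htt.2, max_eq_right htt.1]
  have heq2 : feasSet h I₁ = (Icc (0:ℝ) 1 ×ˢ Icc (0:ℝ) 1) ∩
      {p : ℝ × ℝ | p.2 * ht p.1 + p.1 * ht p.2 - I₁ * (p.1 + p.2) ≤ 0} := by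
    rw [feas_eq h I₁]
    ext p
    simp only [mem_inter_iff, mem_setOf_eq, mem_prod, and_congr_right_iff]
    intro hp
    rw [hcl p.1 hp.1, hcl p.2 hp.2]
  rw [heq2]
  apply (isCompact_Icc.prod isCompact_Icc).inter_right
  have hg : Continuous fun p : ℝ × ℝ =>
      p.2 * ht p.1 + p.1 * ht p.2 - I₁ * (p.1 + p.2) :=
    ((continuous_snd.mul (htc.comp continuous_fst)).add
      (continuous_fst.mul (htc.comp continuous_snd))).sub
      (continuous_const.mul (continuous_fst.add continuous_snd))
  exact isClosed_le hg continuous_const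

lemma gain_contOn (h : ℝ → ℝ) (I₁ v : ℝ) (hv : 0 < v) :
    ContinuousOn (gainR v) (feasSet h I₁) := by
  intro p hp
  rcases hp with ⟨_, _, hsum, _⟩ | hp
  · apply ContinuousAt.continuousWithinAt
    exact (continuous_snd.continuousAt.div
      (continuous_fst.continuousAt.add continuous_snd.continuousAt) (ne_of_gt hsum)).mul
      ((continuous_fst.continuousAt.sub continuousAt_const).max continuousAt_const)
  · simp only [mem_singleton_iff] at hp
    subst hp
    apply ContinuousAt.continuousWithinAt
    apply Filter.EventuallyEq.continuousAt (y := 0)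
    have hU : {q : ℝ × ℝ | q.1 < v} ∈ 𝓝 ((0:ℝ), (0:ℝ)) :=
      (isOpen_lt continuous_fst continuous_const).mem_nhds (by simpa using hv)
    filter_upwards [hU] with q hq
    show gainR v q = 0
    rw [gainR, max_eq_right (by linarith [show q.1 < v from hq])]
    ring

set_option maxHeartbeats 2000000 in
/-- Lemmas 2 and 3 (binary-signal content): the right-wing voter's optimal personalized signal
exists, is strictly obeyed, exhausts the bandwidth, and exhibits an own-party bias. -/
theorem stmt_12 (h h' : ℝ → ℝ)
    (hcont : ContinuousOn h (Set.Icc 0 1))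
    (hconv : StrictConvexOn ℝ (Set.Icc 0 1) h)
    (hderiv : ∀ t ∈ Set.Ioo (0:ℝ) 1, HasDerivAt h (h' t) t)
    (h0 : h 0 = 0) (hpos : ∀ t ∈ Set.Ioc (0:ℝ) 1, 0 < h t)
    (v I₁ : ℝ) (hv : v ∈ Set.Ioo (0:ℝ) 1) (hI₀ : 0 < I₁) (hI₁ : I₁ < h 1) :
    (∃ p ∈ feasSet h I₁, ∀ q ∈ feasSet h I₁, gainR v q ≤ gainR v p) ∧
    (∀ p ∈ feasSet h I₁, (∀ q ∈ feasSet h I₁, gainR v q ≤ gainR v p) →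
      v < p.1 ∧ 0 < gainR v p ∧ 0 < p.2 ∧ attCost h p.1 p.2 = I₁ ∧ p.2 < p.1) := by
  obtain ⟨hv0, hv1⟩ := hv
  have hKne : ((0:ℝ), (0:ℝ)) ∈ feasSet h I₁ := Or.inr rfl
  obtain ⟨p₀, hp₀K, hp₀max⟩ :=
    (feas_compact h I₁ hcont).exists_isMaxOn ⟨_, hKne⟩ (gain_contOn h I₁ v hv0)
  constructor
  · exact ⟨p₀, hp₀K, fun q hq => hp₀max hq⟩
  intro p hpK hpmax
  -- Step A: a feasible point with positive gain
  obtain ⟨y₀, hy₀, hFy₀⟩ : ∃ y₀, y₀ ∈ Ioc (0:ℝ) 1 ∧ y₀ * h 1 + h y₀ - I₁ * (1 + y₀) < 0 := by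
    have hF : ContinuousWithinAt (fun y : ℝ => y * h 1 + h y - I₁ * (1 + y)) (Icc 0 1) 0 := by
      refine ContinuousWithinAt.sub (ContinuousWithinAt.add ?_ ?_) ?_
      · exact (continuousWithinAt_id.mul continuousWithinAt_const)
      · exact hcont 0 ⟨le_refl 0, zero_le_one⟩
      · exact (continuousWithinAt_const.mul (continuousWithinAt_const.add continuousWithinAt_id))
    have hF0 : (fun y : ℝ => y * h 1 + h y - I₁ * (1 + y)) 0 < 0 := by
      simp [h0]; linarith
    have hev : ∀ᶠ y in 𝓝[Icc (0:ℝ) 1] 0,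
        (fun y : ℝ => y * h 1 + h y - I₁ * (1 + y)) y < 0 :=
      hF.eventually (eventually_lt_nhds hF0)
    have hmono : 𝓝[Ioc (0:ℝ) 1] (0:ℝ) ≤ 𝓝[Icc (0:ℝ) 1] (0:ℝ) :=
      nhdsWithin_mono 0 Ioc_subset_Icc_self
    have hnb : (𝓝[Ioc (0:ℝ) 1] (0:ℝ)).NeBot := by
      apply mem_closure_iff_nhdsWithin_neBot.1
      rw [closure_Ioc (one_ne_zero : (1:ℝ) ≠ 0).symm]
      exact ⟨le_refl 0, zero_le_one⟩
    have hev' : ∀ᶠ y in 𝓝[Ioc (0:ℝ) 1] 0, y * h 1 + h y - I₁ * (1 + y) < 0 := hmono hev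
    haveI := hnb
    obtain ⟨y₀, hy1, hy2⟩ := (hev'.and self_mem_nhdsWithin).exists
    exact ⟨y₀, hy2, hy1⟩
  have hq₀K : ((1:ℝ), y₀) ∈ feasSet h I₁ := by
    left
    refine ⟨⟨zero_le_one, le_refl 1⟩, ⟨hy₀.1.le, hy₀.2⟩, by simp; linarith [hy₀.1], ?_⟩
    show (y₀ * h 1 + 1 * h y₀) / (1 + y₀) ≤ I₁
    rw [div_le_iff₀ (by linarith [hy₀.1])]
    linarith
  have hq₀pos : 0 < gainR v ((1:ℝ), y₀) := by
    rw [gainR, max_eq_left (by simp; linarith)]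
    have h1y : (0:ℝ) < 1 + y₀ := by linarith [hy₀.1]
    have := div_pos hy₀.1 h1y
    simp only
    nlinarith
  have hgp : 0 < gainR v p := lt_of_lt_of_le hq₀pos (hpmax _ hq₀K)
  have hpmem : p.1 ∈ Icc (0:ℝ) 1 ∧ p.2 ∈ Icc (0:ℝ) 1 ∧ 0 < p.1 + p.2 ∧
      attCost h p.1 p.2 ≤ I₁ := by
    rcases hpK with hm | hp00
    · exact hm
    · exfalso
      simp only [mem_singleton_iff] at hp00
      rw [hp00] at hgp
      simp [gainR] at hgp
  obtain ⟨hx01, hy01, hsum, hIle⟩ := hpmem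
  have hxv : v < p.1 := by
    by_contra hle
    push_neg at hle
    rw [gainR, max_eq_right (by linarith)] at hgp
    simp at hgp
  have hgain_eq : gainR v p = p.2 / (p.1 + p.2) * (p.1 - v) := by
    rw [gainR, max_eq_left (by linarith)]
  have hy : 0 < p.2 := by
    rcases hy01.1.lt_or_eq with hlt | heq
    · exact hlt
    · exfalso; rw [hgain_eq, ← heq] at hgp; simp at hgp
  have hx0 : 0 < p.1 := lt_trans hv0 hxv
  -- Step B: bandwidth exhaustion
  have hIeq : attCost h p.1 p.2 = I₁ := by
    by_contra hne
    have hIlt : attCost h p.1 p.2 < I₁ := lt_of_le_of_ne hIle hne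
    rcases hx01.2.lt_or_eq with hx1 | hx1
    · -- p.1 < 1 : increase x
      have hco : ContinuousAt (fun s : ℝ => (p.2 * h s + s * h p.2) / (s + p.2)) p.1 := by
        refine ContinuousAt.div ?_ ?_ (by positivity)
        · exact (continuousAt_const.mul (hderiv p.1 ⟨hx0, hx1⟩).continuousAt).add
            (continuousAt_id.mul continuousAt_const)
        · exact continuousAt_id.add continuousAt_const
      have hev1 : ∀ᶠ s in 𝓝 p.1, (p.2 * h s + s * h p.2) / (s + p.2) < I₁ :=
        hco.eventually (eventually_lt_nhds hIlt)
      have hev2 : ∀ᶠ s in 𝓝 p.1, s < 1 := eventually_lt_nhds hx1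
      have hev3 : ∀ᶠ s in 𝓝[>] p.1,
          ((p.2 * h s + s * h p.2) / (s + p.2) < I₁ ∧ s < 1) :=
        (hev1.and hev2).filter_mono nhdsWithin_le_nhds
      obtain ⟨s, ⟨hsI, hs1⟩, hsgt⟩ := (hev3.and self_mem_nhdsWithin).exists
      have hsgt : p.1 < s := hsgt
      have hqK : ((s:ℝ), p.2) ∈ feasSet h I₁ := by
        left
        refine ⟨⟨by linarith, hs1.le⟩, hy01, by simp; linarith, ?_⟩
        show (p.2 * h s + s * h p.2) / (s + p.2) ≤ I₁
        exact hsI.le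
      have e2 : gainR v (s, p.2) = p.2 / (s + p.2) * (s - v) := by
        show p.2 / (s + p.2) * max (s - v) 0 = _
        rw [max_eq_left (by linarith)]
      have hlt : gainR v p < gainR v (s, p.2) := by
        rw [hgain_eq, e2, div_mul_eq_mul_div, div_mul_eq_mul_div,
          div_lt_div_iff₀ (by linarith) (by linarith)]
        nlinarith [mul_pos hy (mul_pos (sub_pos.2 hsgt) (add_pos hy hv0))]
      linarith [hpmax _ hqK]
    · -- p.1 = 1 : increase y
      have hy1 : p.2 < 1 := by
        rcases hy01.2.lt_or_eq with hlt | heq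
        · exact hlt
        · exfalso
          rw [hx1, heq] at hIlt
          rw [show attCost h 1 1 = h 1 by rw [attCost]; ring_nf] at hIlt
          linarith
      rw [hx1] at hIlt
      have hco : ContinuousAt (fun s : ℝ => (s * h 1 + 1 * h s) / (1 + s)) p.2 := by
        refine ContinuousAt.div ?_ ?_ (by positivity)
        · exact (continuousAt_id.mul continuousAt_const).add
            (continuousAt_const.mul (hderiv p.2 ⟨hy, hy1⟩).continuousAt)
        · exact continuousAt_const.add continuousAt_id
      have hev1 : ∀ᶠ s in 𝓝 p.2, (s * h 1 + 1 * h s) / (1 + s) < I₁ :=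
        hco.eventually (eventually_lt_nhds hIlt)
      have hev2 : ∀ᶠ s in 𝓝 p.2, s < 1 := eventually_lt_nhds hy1
      have hev3 : ∀ᶠ s in 𝓝[>] p.2,
          ((s * h 1 + 1 * h s) / (1 + s) < I₁ ∧ s < 1) :=
        (hev1.and hev2).filter_mono nhdsWithin_le_nhds
      obtain ⟨s, ⟨hsI, hs1⟩, hsgt⟩ := (hev3.and self_mem_nhdsWithin).exists
      have hsgt : p.2 < s := hsgt
      have hqK : ((1:ℝ), s) ∈ feasSet h I₁ := by
        left
        refine ⟨⟨zero_le_one, le_refl 1⟩, ⟨by linarith, hs1.le⟩, by simp; linarith, ?_⟩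
        show (s * h 1 + 1 * h s) / (1 + s) ≤ I₁
        exact hsI.le
      have e2 : gainR v ((1:ℝ), s) = s / (1 + s) * (1 - v) := by
        show s / (1 + s) * max (1 - v) 0 = _
        rw [max_eq_left (by linarith)]
      have hlt : gainR v p < gainR v (1, s) := by
        rw [hgain_eq, e2, hx1, div_mul_eq_mul_div, div_mul_eq_mul_div,
          div_lt_div_iff₀ (by linarith) (by linarith)]
        nlinarith [mul_pos (sub_pos.2 hv1) (sub_pos.2 hsgt)]
      linarith [hpmax _ hqK]
  -- Step C: own-party bias
  have hylex : p.2 ≤ p.1 := by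
    by_contra hgt
    push_neg at hgt
    have hsymK : (p.2, p.1) ∈ feasSet h I₁ := by
      left
      refine ⟨hy01, hx01, by simp; linarith, ?_⟩
      show (p.1 * h p.2 + p.2 * h p.1) / (p.2 + p.1) ≤ I₁
      rw [show (p.1 * h p.2 + p.2 * h p.1) / (p.2 + p.1)
        = attCost h p.1 p.2 by rw [attCost, add_comm p.2 p.1]; ring_nf]
      exact hIle
    have hle := hpmax _ hsymK
    have e2 : gainR v (p.2, p.1) = p.1 / (p.2 + p.1) * (p.2 - v) := by
      show p.1 / (p.2 + p.1) * max (p.2 - v) 0 = _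
      rw [max_eq_left (by linarith)]
    rw [hgain_eq, e2, div_mul_eq_mul_div, div_mul_eq_mul_div,
      div_le_div_iff₀ (by linarith) (by linarith)] at hle
    nlinarith [mul_pos (mul_pos hv0 (sub_pos.2 hgt)) hsum]
  rcases hylex.lt_or_eq with hyx | heq
  · exact ⟨hxv, hgp, hy, hIeq, hyx⟩
  exfalso
  -- rule out the symmetric point
  set a := p.1 with ha
  have haI : h a = I₁ := by
    rw [← hIeq, heq, attCost]
    field_simp
  have ha1 : a < 1 := by
    rcases hx01.2.lt_or_eq with hlt | h1
    · exact hlt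
    · exfalso; rw [h1] at haI; linarith
  have hd : HasDerivAt h (h' a) a := hderiv a ⟨hx0, ha1⟩
  have hd'pos : 0 < h' a := by
    have hsl : Tendsto (slope h a) (𝓝[>] a) (𝓝 (h' a)) :=
      (hasDerivAt_iff_tendsto_slope.1 hd).mono_left
        (nhdsWithin_mono a (fun x hx => ne_of_gt hx))
    have hge : I₁ / a ≤ h' a := by
      refine ge_of_tendsto hsl ?_
      filter_upwards [Ioo_mem_nhdsGT_of_mem (⟨le_refl a, ha1⟩ : a ∈ Ico a 1)] with t ht
      have hmono := hconv.convexOn.slope_mono_adjacent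
        (⟨le_refl (0:ℝ), zero_le_one⟩ : (0:ℝ) ∈ Icc (0:ℝ) 1)
        (⟨by linarith [ht.1], ht.2.le⟩ : t ∈ Icc (0:ℝ) 1) hx0 ht.1
      rw [h0] at hmono
      rw [slope_def_field]
      calc I₁ / a = (h a - 0) / (a - 0) := by rw [haI]; norm_num
        _ ≤ (h t - h a) / (t - a) := hmono
    have : 0 < I₁ / a := div_pos hI₀ hx0
    linarith
  set c := (a + v) / a with hc
  have hac : c * a = a + v := by rw [hc, div_mul_cancel₀ _ (ne_of_gt hx0)]
  have hc1 : 1 < c := by rw [hc]; rw [lt_div_iff₀ hx0]; linarith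
  have hcpos : 0 < c := by linarith
  -- derivative machinery
  have hX : HasDerivAt (fun t : ℝ => a + t) 1 0 := by
    simpa using (hasDerivAt_id (0:ℝ)).const_add a
  have hY : HasDerivAt (fun t : ℝ => a - c * t) (-c) 0 := by
    simpa using ((hasDerivAt_id (0:ℝ)).const_mul c).const_sub a
  have hd0 : HasDerivAt h (h' a) ((fun t : ℝ => a + t) 0) := by simpa using hd
  have hhX : HasDerivAt (fun t : ℝ => h (a + t)) (h' a) 0 := by
    simpa [Function.comp_def] using hd0.comp 0 hX
  have hd0' : HasDerivAt h (h' a) ((fun t : ℝ => a - c * t) 0) := by simpa using hd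
  have hhY : HasDerivAt (fun t : ℝ => h (a - c * t)) (h' a * -c) 0 := by
    simpa [Function.comp_def] using hd0'.comp 0 hY
  have hD0ne : ((fun t : ℝ => a + t) 0 + (fun t : ℝ => a - c * t) 0) ≠ 0 := by
    simp only; norm_num; linarith
  have hN := (hY.mul hhX).add (hX.mul hhY)
  have hD := hX.add hY
  have hφraw := hN.div hD hD0ne
  have hψraw := (hY.div hD hD0ne).mul (hX.sub_const v)
  have hane : a ≠ 0 := ne_of_gt hx0
  have hφ : HasDerivAt
      (fun t : ℝ => ((a - c * t) * h (a + t) + (a + t) * h (a - c * t)) / ((a + t) + (a - c * t)))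
      ((1 - c) * h' a / 2) 0 := by
    refine hφraw.congr_deriv ?_
    norm_num
    field_simp
    ring
  have hψ : HasDerivAt
      (fun t : ℝ => (a - c * t) / ((a + t) + (a - c * t)) * ((a + t) - v))
      ((2 * a - (1 + c) * (a - v)) / (4 * a)) 0 := by
    refine hψraw.congr_deriv ?_
    norm_num
    field_simp
    ring
  have hφneg : (1 - c) * h' a / 2 < 0 :=
    div_neg_of_neg_of_pos (mul_neg_of_neg_of_pos (by linarith) hd'pos) two_pos
  have hψpos : 0 < (2 * a - (1 + c) * (a - v)) / (4 * a) := by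
    apply div_pos ?_ (by linarith)
    have hnum : 2 * a - (1 + c) * (a - v) = c * v := by linear_combination -hac
    rw [hnum]
    positivity
  have evφ := ev_lt_of_deriv_neg hφ hφneg
  have evψ := ev_gt_of_deriv_pos hψ hψpos
  have evb1 : ∀ᶠ t in 𝓝[>] (0:ℝ), t < 1 - a :=
    (eventually_lt_nhds (by linarith : (0:ℝ) < 1 - a)).filter_mono nhdsWithin_le_nhds
  have evb2 : ∀ᶠ t in 𝓝[>] (0:ℝ), t < a / c :=
    (eventually_lt_nhds (div_pos hx0 hcpos)).filter_mono nhdsWithin_le_nhds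
  obtain ⟨t, ⟨⟨⟨hφt, hψt⟩, hb1⟩, hb2⟩, ht0⟩ :=
    ((((evφ.and evψ).and evb1).and evb2).and self_mem_nhdsWithin).exists
  have ht0 : (0:ℝ) < t := ht0
  have hct : c * t < a := by rw [← lt_div_iff₀' hcpos]; exact hb2
  have hqK : ((a + t), (a - c * t)) ∈ feasSet h I₁ := by
    left
    refine ⟨⟨by show (0:ℝ) ≤ a + t; linarith, by show a + t ≤ 1; linarith⟩,
      ⟨by show (0:ℝ) ≤ a - c * t; linarith, by show a - c * t ≤ 1; nlinarith⟩,
      by show (0:ℝ) < a + t + (a - c * t); linarith, ?_⟩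
    show ((a - c * t) * h (a + t) + (a + t) * h (a - c * t)) / ((a + t) + (a - c * t)) ≤ I₁
    have hφ0 : ((a - c * 0) * h (a + 0) + (a + 0) * h (a - c * 0)) / ((a + 0) + (a - c * 0))
        = I₁ := by
      rw [← haI]; norm_num; field_simp
    have := hφt
    rw [hφ0] at this
    exact this.le
  have hgq : gainR v ((a + t), (a - c * t)) = (a - c * t) / ((a + t) + (a - c * t)) * ((a + t) - v) := by
    rw [gainR, max_eq_left (by simp; linarith)]
  have hgp_eq : gainR v p = (a - c * 0) / ((a + 0) + (a - c * 0)) * ((a + 0) - v) := by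
    rw [hgain_eq, heq]
    norm_num
  have := hpmax _ hqK
  rw [hgq, hgp_eq] at this
  exact absurd this (not_le.2 hψt)
end

section
/- Let I ∈ (0,1]. The unique maximizer of the centrist voter's objective V₀(x, y) = xy/(x + y) over the set {(x, y) ∈ (0,1]² : xy ≤ I} is the neutral signal (√I, √I); that is, every (x, y) in the set with (x, y) ≠ (√I, √I) satisfies xy/(x+y) < √I/2. -/
/-- Lemma 3 for the centrist voter under quadratic attention cost: the neutral signal
(√I, √I) is the unique maximizer of V₀(x,y) = xy/(x+y) subject to xy ≤ I. -/
theorem stmt_13 (I : ℝ) (hI : 0 < I) (hI1 : I ≤ 1) (x y : ℝ)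
    (hx : 0 < x) (hx1 : x ≤ 1) (hy : 0 < y) (hy1 : y ≤ 1)
    (hfeas : x * y ≤ I) (hne : (x, y) ≠ (Real.sqrt I, Real.sqrt I)) :
    x * y / (x + y) < Real.sqrt I / 2 := by
  set s := Real.sqrt I with hs
  have hs0 : 0 < s := Real.sqrt_pos.mpr hI
  have hsI : s ^ 2 = I := Real.sq_sqrt hI.le
  have hxy0 : 0 < x + y := by linarith
  rw [div_lt_div_iff₀ hxy0 two_pos]
  have key : 2 * (x * y) < s * (x + y) := by
    by_cases hxyeq : x = y
    · subst hxyeq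
      have hxs : x ≠ s := by
        intro h; exact hne (by simp [h])
      have hxle : x ≤ s := by nlinarith
      have hxlt : x < s := lt_of_le_of_ne hxle hxs
      nlinarith
    · set t := Real.sqrt (x * y) with ht
      have ht2 : t ^ 2 = x * y := Real.sq_sqrt (by positivity)
      have ht0 : 0 < t := Real.sqrt_pos.mpr (by positivity)
      have hts : t ≤ s := Real.sqrt_le_sqrt hfeas
      have hsum : 2 * t < x + y := by
        have hxx : Real.sqrt x ^ 2 = x := Real.sq_sqrt hx.le
        have hyy : Real.sqrt y ^ 2 = y := Real.sq_sqrt hy.le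
        have hmul : t = Real.sqrt x * Real.sqrt y := Real.sqrt_mul hx.le y
        have hneq : Real.sqrt x ≠ Real.sqrt y := fun h => hxyeq (by
          rw [← hxx, ← hyy, h])
        have : (Real.sqrt x - Real.sqrt y) ^ 2 > 0 :=
          pow_two_pos_of_ne_zero (sub_ne_zero.mpr hneq)
        nlinarith
      nlinarith
  linarith
end

section
/- Let 0 < v < v' and x, y, x', y' > 0. Suppose the revealed-preference inequalities hold: y(x − v)/(x + y) > y'(x' − v)/(x' + y') and y'(x' − v')/(x' + y') > y(x − v')/(x + y). Then y'/(x' + y') < y/(x + y), equivalently x'/y' > x/y; that is, the signal (x', y') is strictly more R-biased than the signal (x, y). -/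
/-- Monotone-comparative-statics step of Lemma 3: revealed preference implies that the more
partisan voter's signal is strictly more R-biased. -/
theorem stmt_14 (v v' x y x' y' : ℝ)
    (hv : 0 < v) (hvv' : v < v')
    (hx : 0 < x) (hy : 0 < y) (hx' : 0 < x') (hy' : 0 < y')
    (hrp₁ : y * (x - v) / (x + y) > y' * (x' - v) / (x' + y'))
    (hrp₂ : y' * (x' - v') / (x' + y') > y * (x - v') / (x + y)) :
    y' / (x' + y') < y / (x + y) ∧ x' / y' > x / y := by
  have hxy : 0 < x + y := by linarith
  have hxy' : 0 < x' + y' := by linarith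
  have h1 : y' * (x' - v) * (x + y) < y * (x - v) * (x' + y') :=
    (div_lt_div_iff₀ hxy' hxy).mp hrp₁
  have h2 : y * (x - v') * (x' + y') < y' * (x' - v') * (x + y) :=
    (div_lt_div_iff₀ hxy hxy').mp hrp₂
  have key : y' * (x + y) < y * (x' + y') := by nlinarith
  constructor
  · exact (div_lt_div_iff₀ hxy' hxy).mpr key
  · rw [gt_iff_lt, div_lt_div_iff₀ hy hy']
    nlinarith
end

section
/- Let I ∈ (0,1) and P₀ > 0 satisfy 2√I < 2P₀(1 + I) < 1 + I, and define f(z) = −2P₀I(1 + I)z² + 2Iz + P₀. Then z* = 1/(2P₀(1 + I)) lies strictly between 1/(1 + I) and 1/(2√I), f is strictly increasing on [1/(1 + I), z*] and strictly decreasing on [z*, 1/(2√I)]; in particular f is not monotone on the interval [1/(1 + I), 1/(2√I)]. -/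
/-- Proposition 1 (quadratic-cost case): when 2P₀(1+I) ∈ (2√I, 1+I), the societal incentive
power f(z) = −2P₀I(1+I)z² + 2Iz + P₀ is hump-shaped, hence non-monotone, on the relevant
interval [1/(1+I), 1/(2√I)]. -/
theorem stmt_16 (I P₀ : ℝ) (hI : I ∈ Set.Ioo (0:ℝ) 1) (hP₀ : 0 < P₀)
    (hlow : 2 * Real.sqrt I < 2 * P₀ * (1 + I)) (hhigh : 2 * P₀ * (1 + I) < 1 + I) :
    1 / (1 + I) < 1 / (2 * P₀ * (1 + I)) ∧
    1 / (2 * P₀ * (1 + I)) < 1 / (2 * Real.sqrt I) ∧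
    StrictMonoOn (fun z : ℝ => -2 * P₀ * I * (1 + I) * z ^ 2 + 2 * I * z + P₀)
      (Set.Icc (1 / (1 + I)) (1 / (2 * P₀ * (1 + I)))) ∧
    StrictAntiOn (fun z : ℝ => -2 * P₀ * I * (1 + I) * z ^ 2 + 2 * I * z + P₀)
      (Set.Icc (1 / (2 * P₀ * (1 + I))) (1 / (2 * Real.sqrt I))) ∧
    ¬ (MonotoneOn (fun z : ℝ => -2 * P₀ * I * (1 + I) * z ^ 2 + 2 * I * z + P₀)
        (Set.Icc (1 / (1 + I)) (1 / (2 * Real.sqrt I))) ∨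
       AntitoneOn (fun z : ℝ => -2 * P₀ * I * (1 + I) * z ^ 2 + 2 * I * z + P₀)
        (Set.Icc (1 / (1 + I)) (1 / (2 * Real.sqrt I)))) := by
  obtain ⟨hI0, hI1⟩ := hI
  have hs0 : 0 < Real.sqrt I := Real.sqrt_pos.mpr hI0
  have h1I : (0:ℝ) < 1 + I := by linarith
  have hD : (0:ℝ) < 2 * P₀ * (1 + I) := by positivity
  have hs2 : (0:ℝ) < 2 * Real.sqrt I := by linarith
  set f : ℝ → ℝ := fun z : ℝ => -2 * P₀ * I * (1 + I) * z ^ 2 + 2 * I * z + P₀ with hf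
  set a : ℝ := 2 * P₀ * I * (1 + I) with ha
  have ha0 : 0 < a := by positivity
  set zs : ℝ := 1 / (2 * P₀ * (1 + I)) with hzs
  have hzsval : a * zs = I := by
    rw [hzs, ha]; field_simp
  have hdiff : ∀ x y : ℝ, f y - f x = (y - x) * (2 * I - a * (x + y)) := by
    intro x y; simp only [hf, ha]; ring
  have hlo : 1 / (1 + I) < zs := by
    rw [hzs]
    apply one_div_lt_one_div_of_lt hD hhigh
  have hhi : zs < 1 / (2 * Real.sqrt I) := by
    rw [hzs]
    apply one_div_lt_one_div_of_lt hs2 hlow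
  have hmono : StrictMonoOn f (Set.Icc (1 / (1 + I)) zs) := by
    intro x hx y hy hxy
    have : 0 < f y - f x := by
      rw [hdiff]
      apply mul_pos (by linarith)
      have hxs : x < zs := lt_of_lt_of_le hxy hy.2
      have : a * (x + y) < a * (zs + zs) := by
        apply mul_lt_mul_of_pos_left _ ha0
        have := hy.2; linarith
      have h2 : a * (zs + zs) = 2 * I := by rw [mul_add, hzsval]; ring
      linarith
    linarith
  have hanti : StrictAntiOn f (Set.Icc zs (1 / (2 * Real.sqrt I))) := by
    intro x hx y hy hxy
    have : 0 < f x - f y := by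
      rw [show f x - f y = -(f y - f x) by ring, hdiff]
      have hys : zs < y := lt_of_le_of_lt hx.1 hxy
      have : a * (zs + zs) < a * (x + y) := by
        apply mul_lt_mul_of_pos_left _ ha0
        have := hx.1; linarith
      have h2 : a * (zs + zs) = 2 * I := by rw [mul_add, hzsval]; ring
      nlinarith
    linarith
  refine ⟨hlo, hhi, hmono, hanti, ?_⟩
  have hlomem : (1 / (1 + I)) ∈ Set.Icc (1 / (1 + I)) (1 / (2 * Real.sqrt I)) :=
    ⟨le_refl _, by linarith⟩
  have hzsmem : zs ∈ Set.Icc (1 / (1 + I)) (1 / (2 * Real.sqrt I)) :=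
    ⟨le_of_lt hlo, le_of_lt hhi⟩
  have hhimem : (1 / (2 * Real.sqrt I)) ∈ Set.Icc (1 / (1 + I)) (1 / (2 * Real.sqrt I)) :=
    ⟨by linarith, le_refl _⟩
  have h1 : f (1 / (1 + I)) < f zs :=
    hmono ⟨le_refl _, le_of_lt hlo⟩ ⟨le_of_lt hlo, le_refl _⟩ hlo
  have h2 : f (1 / (2 * Real.sqrt I)) < f zs :=
    hanti ⟨le_refl _, le_of_lt hhi⟩ ⟨le_of_lt hhi, le_refl _⟩ hhi
  rintro (hm | ha')
  · exact absurd (hm hzsmem hhimem (le_of_lt hhi)) (not_le.mpr h2)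
  · exact absurd (ha' hlomem hzsmem (le_of_lt hlo)) (not_le.mpr h1)
end

section
/- Let I ∈ (0,1) and v ∈ ℝ with 0 < v ≤ (1 − I)/2, and define x*(v) = v + √(v² + I). Then x*(v) ∈ (√I, 1], and x*(v) is the unique maximizer over x ∈ [√I, 1] of the function f_v(x) = I(x − v)/(x² + I), the right-wing voter's expressive voting gain along the exhausted level curve y = I/x. Moreover, x*(v) is strictly increasing in v on (0, (1 − I)/2]; consequently, writing S(v) = x*(v) + I/x*(v), the incentive power P(v) = 2I/S(v) is strictly decreasing in v and the disagreement D(v) = 1 − 2I(1 + I)/S(v)² is strictly increasing in v. -/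
/-- The quadratic-cost optimal R-biased signal: x*(v) = v + √(v² + I). -/
noncomputable def xstar (I v : ℝ) : ℝ := v + Real.sqrt (v ^ 2 + I)

/-- S(v) = x*(v) + I/x*(v), the denominator appearing in the incentive power and
disagreement formulas along the level curve xy = I. -/
noncomputable def Sden (I v : ℝ) : ℝ := xstar I v + I / xstar I v

lemma xstar_gt (I v : ℝ) (hI : 0 < I) (hv : 0 < v) : Real.sqrt I < xstar I v := by
  have h1 : Real.sqrt I ≤ Real.sqrt (v ^ 2 + I) := Real.sqrt_le_sqrt (by nlinarith)
  have : Real.sqrt I < v + Real.sqrt (v ^ 2 + I) := by linarith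
  exact this

lemma xstar_le_one (I v : ℝ) (hI : 0 < I) (hv : 0 < v) (hv' : v ≤ (1 - I) / 2) :
    xstar I v ≤ 1 := by
  have h1v : 0 < 1 - v := by nlinarith
  have h : Real.sqrt (v ^ 2 + I) ≤ 1 - v := by
    rw [show (1:ℝ) - v = Real.sqrt ((1 - v) ^ 2) by rw [Real.sqrt_sq h1v.le]]
    exact Real.sqrt_le_sqrt (by nlinarith)
  unfold xstar; linarith

lemma xstar_mono (I : ℝ) (hI : 0 < I) {v₁ v₂ : ℝ} (h1 : 0 < v₁) (h12 : v₁ < v₂) :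
    xstar I v₁ < xstar I v₂ := by
  have : Real.sqrt (v₁ ^ 2 + I) < Real.sqrt (v₂ ^ 2 + I) := by
    apply Real.sqrt_lt_sqrt (by nlinarith); nlinarith
  unfold xstar; linarith

lemma sden_pos (I v : ℝ) (hI : 0 < I) (hv : 0 < v) : 0 < Sden I v := by
  have hx : 0 < xstar I v := lt_trans (Real.sqrt_pos.mpr hI) (xstar_gt I v hI hv)
  have : 0 < I / xstar I v := div_pos hI hx
  unfold Sden; linarith

lemma sden_mono (I : ℝ) (hI : 0 < I) {v₁ v₂ : ℝ} (h1 : 0 < v₁) (h12 : v₁ < v₂) :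
    Sden I v₁ < Sden I v₂ := by
  set t₁ := xstar I v₁ with ht1
  set t₂ := xstar I v₂ with ht2
  have hs : Real.sqrt I < t₁ := xstar_gt I v₁ hI h1
  have hlt : t₁ < t₂ := xstar_mono I hI h1 h12
  have hsp : 0 < Real.sqrt I := Real.sqrt_pos.mpr hI
  have hp1 : 0 < t₁ := lt_trans hsp hs
  have hp2 : 0 < t₂ := lt_trans hp1 hlt
  have hII : Real.sqrt I * Real.sqrt I = I := Real.mul_self_sqrt hI.le
  have hprod : I < t₁ * t₂ := by nlinarith
  have : Sden I v₂ - Sden I v₁ = (t₂ - t₁) * (t₁ * t₂ - I) / (t₁ * t₂) := by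
    unfold Sden; rw [← ht1, ← ht2]; field_simp; ring
  nlinarith [div_pos (mul_pos (by linarith : (0:ℝ) < t₂ - t₁) (by linarith : (0:ℝ) < t₁ * t₂ - I)) (mul_pos hp1 hp2)]

/-- Quadratic-cost closed form of the optimal own-party-biased signal (Lemma 4(i)):
x*(v) ∈ (√I, 1] uniquely maximizes I(x−v)/(x²+I) on [√I, 1], is strictly increasing in v, and
hence the incentive power P(v) = 2I/S(v) strictly decreases and the disagreement
D(v) = 1 − 2I(1+I)/S(v)² strictly increases in v. -/
theorem stmt_19 (I v : ℝ) (hI : I ∈ Set.Ioo (0:ℝ) 1)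
    (hv : 0 < v) (hv' : v ≤ (1 - I) / 2) :
    (Real.sqrt I < xstar I v ∧ xstar I v ≤ 1) ∧
    (∀ x ∈ Set.Icc (Real.sqrt I) 1, x ≠ xstar I v →
      I * (x - v) / (x ^ 2 + I) < I * (xstar I v - v) / ((xstar I v) ^ 2 + I)) ∧
    (∀ v₁ v₂ : ℝ, 0 < v₁ → v₁ < v₂ → v₂ ≤ (1 - I) / 2 →
      xstar I v₁ < xstar I v₂ ∧
      2 * I / Sden I v₂ < 2 * I / Sden I v₁ ∧
      1 - 2 * I * (1 + I) / (Sden I v₁) ^ 2 < 1 - 2 * I * (1 + I) / (Sden I v₂) ^ 2) := by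
  obtain ⟨hI0, hI1⟩ := hI
  have hsp : 0 < Real.sqrt I := Real.sqrt_pos.mpr hI0
  refine ⟨⟨xstar_gt I v hI0 hv, xstar_le_one I v hI0 hv hv'⟩, ?_, ?_⟩
  · intro x hx hne
    set s := Real.sqrt (v ^ 2 + I) with hs
    have hs2 : s ^ 2 = v ^ 2 + I := Real.sq_sqrt (by nlinarith)
    have hxs : xstar I v = v + s := rfl
    have hxpos : 0 < x := lt_of_lt_of_le hsp hx.1
    have hd1 : 0 < x ^ 2 + I := by positivity
    have hspos : 0 < s := Real.sqrt_pos.mpr (by nlinarith)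
    have hd2 : 0 < (xstar I v) ^ 2 + I := by positivity
    rw [div_lt_div_iff₀ hd1 hd2, hxs]
    have hne' : x - (v + s) ≠ 0 := by rw [hxs] at hne; exact sub_ne_zero.mpr hne
    have hsq : 0 < (x - (v + s)) ^ 2 := by positivity
    have hrw : (v + s) ^ 2 + I = 2 * s * (v + s) := by linear_combination -hs2
    rw [hrw]
    have key : I * (v + s - v) * (x ^ 2 + I) - I * (x - v) * (2 * s * (v + s)) =
        I * s * (x - (v + s)) ^ 2 := by linear_combination (-(I * s)) * hs2
    nlinarith [mul_pos (mul_pos hI0 hspos) hsq]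
  · intro v₁ v₂ h1 h12 h2
    refine ⟨xstar_mono I hI0 h1 h12, ?_, ?_⟩
    · have hS1 := sden_pos I v₁ hI0 h1
      have hlt := sden_mono I hI0 h1 h12
      exact div_lt_div_of_pos_left (by linarith) hS1 hlt
    · have hS1 := sden_pos I v₁ hI0 h1
      have hlt := sden_mono I hI0 h1 h12
      have h2' : (Sden I v₁) ^ 2 < (Sden I v₂) ^ 2 := by nlinarith
      have := div_lt_div_of_pos_left (by nlinarith : (0:ℝ) < 2 * I * (1 + I)) (by positivity) h2'
      linarith
end
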